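/- arXiv:1804.08325 — 5 statements merged into one kernel-verified Lean document; each statement's English description precedes it below -/
import Mathlib

section
/- For the canonical monomial path C_mono: t ↦ (t, t^2, ..., t^d) in ℝ^d, the entry σ_{i_1 i_2 ... i_k} of the k-th signature tensor equals the product ∏_{j=1}^{k} i_j/(i_1 + i_2 + ... + i_j). -/
open scoped BigOperators
open Matrix

/-- Iterated-integral signature: `sigAux` integrates the head letter outermost. -/
noncomputable def sigAux (d : ℕ) (X : ℝ → Fin d → ℝ) : List (Fin d) → ℝ → ℝ
  | [], _ => 1
  | i :: w, t => ∫ s in (0:ℝ)..t, sigAux d X w s * deriv (fun u => X u i) s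

/-- The signature coordinate σ_{i₁⋯i_k} of the path `X`, for the word `w = [i₁,…,i_k]`. -/
noncomputable def sigEntry (d : ℕ) (X : ℝ → Fin d → ℝ) (w : List (Fin d)) : ℝ :=
  sigAux d X w.reverse 1

/-- A path `[0,1] → ℝ^d` is piecewise continuously differentiable. -/
def PiecewiseC1 (d : ℕ) (X : ℝ → Fin d → ℝ) : Prop :=
  ∃ (m : ℕ) (t : Fin (m + 1) → ℝ), StrictMono t ∧ t 0 = 0 ∧ t (Fin.last m) = 1 ∧
    ∀ i : Fin m, ContDiffOn ℝ 1 X (Set.Icc (t i.castSucc) (t i.succ))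

/-- The canonical monomial path `t ↦ (t, t², …, t^d)` in `ℝ^d`. -/
noncomputable def Cmono (d : ℕ) : ℝ → Fin d → ℝ := fun t j => t ^ ((j : ℕ) + 1)

/-!
For a path whose coordinates are monomials `t ^ a j`, the iterated integral of a word `w` up to
time `t` is `c_w * t ^ |w|`, where `|w|` is the total degree of `w`: integrating `c * s ^ p`
against `d(s ^ q)` gives `c * q / (p + q) * t ^ (p + q)`. So appending the letter `i_j` multiplies
the coefficient by `a (i_j) / (a (i_1) + ⋯ + a (i_j))`, and evaluating at `t = 1` leaves the
product. The monomial path is the case `a j = j + 1`.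
-/

theorem integral_pow_mul_deriv_pow (p q : ℕ) (t : ℝ) :
    ∫ s in (0 : ℝ)..t, s ^ p * deriv (fun u : ℝ => u ^ q) s =
      q / (p + q : ℕ) * t ^ (p + q) := by
  rcases q with _ | q
  · simp
  · have hderiv : (fun s : ℝ => s ^ p * deriv (fun u : ℝ => u ^ (q + 1)) s) =
        fun s => (q + 1 : ℝ) * s ^ (p + q) := by
      funext s
      rw [deriv_pow_field, pow_add]
      push_cast
      ring
    rw [hderiv, intervalIntegral.integral_const_mul, integral_pow, ← add_assoc]
    rw [zero_pow (Nat.succ_ne_zero _)]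
    push_cast
    ring

section MonomialPath

variable {d : ℕ} (a : Fin d → ℕ)

def wordWeight (w : List (Fin d)) : ℕ := (w.map a).sum

noncomputable def monomialCoeff : List (Fin d) → ℝ
  | [] => 1
  | i :: w => monomialCoeff w * (a i / wordWeight a (i :: w))

theorem wordWeight_reverse_ofFn {k : ℕ} (i : Fin k → Fin d) :
    wordWeight a (List.ofFn i).reverse = ∑ j, a (i j) := by
  simp [wordWeight, List.sum_ofFn]

theorem monomialCoeff_reverse_ofFn {k : ℕ} (i : Fin k → Fin d) :
    monomialCoeff a (List.ofFn i).reverse =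
      ∏ j, (a (i j) : ℝ) / ∑ l ∈ Finset.Iic j, (a (i l) : ℝ) := by
  induction k with
  | zero => simp [monomialCoeff]
  | succ n ih =>
    have hsplit : (List.ofFn i).reverse =
        i (Fin.last n) :: (List.ofFn fun j : Fin n => i j.castSucc).reverse := by
      rw [List.ofFn_succ', List.concat_eq_append, List.reverse_append]
      rfl
    rw [hsplit, monomialCoeff, ← hsplit, ih, Fin.prod_univ_castSucc, wordWeight_reverse_ofFn]
    simp_rw [Fin.sum_Iic_castSucc, ← Fin.top_eq_last, Finset.Iic_top, Nat.cast_sum]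

theorem sigAux_monomialPath (w : List (Fin d)) (t : ℝ) :
    sigAux d (fun u j => u ^ a j) w t = monomialCoeff a w * t ^ wordWeight a w := by
  induction w generalizing t with
  | nil => simp [sigAux, monomialCoeff, wordWeight]
  | cons i w ih =>
    have hweight : wordWeight a (i :: w) = wordWeight a w + a i := by
      simp [wordWeight, add_comm]
    simp_rw [sigAux, ih, mul_assoc, intervalIntegral.integral_const_mul,
      integral_pow_mul_deriv_pow, monomialCoeff, hweight]
    ring

end MonomialPath

theorem monomial_path_signature_general (d k : ℕ) (i : Fin k → Fin d) :
    sigEntry d (Cmono d) (List.ofFn i) =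
      ∏ j : Fin k, (((i j : ℕ) + 1 : ℝ) /
        (∑ l ∈ Finset.univ.filter (fun l : Fin k => l ≤ j), ((i l : ℕ) + 1 : ℝ))) := by
  have hsig := sigAux_monomialPath (fun j : Fin d => (j : ℕ) + 1) (List.ofFn i).reverse 1
  rw [one_pow, mul_one, monomialCoeff_reverse_ofFn] at hsig
  refine hsig.trans ?_
  push_cast
  simp only [Finset.filter_ge_eq_Iic]

/-- The entry `σ_{i₁…i_k}` of the k-th signature tensor of the canonical monomial path
equals `∏_{j=1}^k i_j / (i_1 + ⋯ + i_j)`. -/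
theorem monomial_path_signature (d k : ℕ) (hk : 1 ≤ k) (i : Fin k → Fin d) :
    sigEntry d (Cmono d) (List.ofFn i) =
      ∏ j : Fin k, (((i j : ℕ) + 1 : ℝ) /
        (∑ l ∈ Finset.univ.filter (fun l : Fin k => l ≤ j), ((i l : ℕ) + 1 : ℝ))) :=
  monomial_path_signature_general d k i
end

section
/- The d×d matrix with entries jk/((j+1)(j+k+1)) (for 1 ≤ j,k ≤ d) has determinant d!/(d+1) · ∏_{1≤i<j≤d}(j−i)^2 / ∏_{i=1}^d ∏_{j=1}^d (i+j+1), which is nonzero. -/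
/-!
With `x i = i + 2` and `y j = j + 1` (0-based indices), the matrix is
`diag((i + 1)/(i + 2)) · C · diag(y)`, where `C i j = 1/(x i + y j)` is a Cauchy matrix.
The Cauchy determinant is computed through the coefficient matrix `A` of the polynomials
`∏_{k ≠ j} (X + y k)`: evaluation at the `x i` gives `V(x) · A = diag(∏_k (x i + y k)) · C`,
and evaluation at the `-y i` gives a diagonal matrix `V(-y) · A`, which determines `det A`.
Both identities are read off with the Vandermonde determinant.
-/

open Matrix Finset Polynomial

section Cauchy

variable {R : Type*} [CommRing R] {n : ℕ}

theorem Matrix.vandermonde_mul_of_coeff (v : Fin n → R) (p : Fin n → R[X])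
    (hp : ∀ j, (p j).natDegree < n) :
    vandermonde v * of (fun (m j : Fin n) => (p j).coeff m) =
      of fun i j => (p j).eval (v i) := by
  ext i j
  rw [mul_apply, of_apply, eval_eq_sum_range' (hp j), ← Fin.sum_univ_eq_sum_range]
  simp [vandermonde_apply, mul_comm]

noncomputable def cauchyPoly (y : Fin n → R) (j : Fin n) : R[X] :=
  ∏ k ∈ univ.erase j, (X + C (y k))

theorem eval_cauchyPoly (y : Fin n → R) (j : Fin n) (t : R) :
    (cauchyPoly y j).eval t = ∏ k ∈ univ.erase j, (t + y k) := by
  simp [cauchyPoly, eval_prod]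

theorem natDegree_cauchyPoly_lt (y : Fin n → R) (j : Fin n) :
    (cauchyPoly y j).natDegree < n :=
  calc (cauchyPoly y j).natDegree ≤ ∑ k ∈ univ.erase j, (X + C (y k) : R[X]).natDegree :=
        natDegree_prod_le (univ.erase j) fun k => X + C (y k)
    _ ≤ ∑ _k ∈ univ.erase j, 1 := sum_le_sum fun _ _ => natDegree_add_C.trans_le natDegree_X_le
    _ < n := by simpa using j.pos

theorem det_coeff_cauchyPoly [IsDomain R] {y : Fin n → R} (hy : Function.Injective y) :
    det (of fun (m j : Fin n) => (cauchyPoly y j).coeff m) =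
      ∏ i : Fin n, ∏ j ∈ Ioi i, (y j - y i) := by
  have hdiag : vandermonde (-y) * of (fun (m j : Fin n) => (cauchyPoly y j).coeff m) =
      diagonal fun i => ∏ k ∈ univ.erase i, (y k - y i) := by
    rw [vandermonde_mul_of_coeff _ _ (natDegree_cauchyPoly_lt y)]
    ext i j
    rcases eq_or_ne i j with rfl | hij
    · simp [eval_cauchyPoly, neg_add_eq_sub]
    · rw [diagonal_apply_ne _ hij, of_apply, eval_cauchyPoly]
      exact prod_eq_zero (mem_erase.mpr ⟨hij, mem_univ i⟩) (by simp)
  have hsplit := prod_prod_Ioi_mul_eq_prod_prod_off_diag fun k i => y k - y i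
  simp only [compl_singleton] at hsplit
  have hdet := congrArg det hdiag
  rw [det_mul, det_vandermonde, det_diagonal, ← hsplit] at hdet
  simp only [prod_mul_distrib, Pi.neg_apply, neg_sub_neg] at hdet
  have hne : ∏ i : Fin n, ∏ j ∈ Ioi i, (y i - y j) ≠ 0 :=
    prod_ne_zero_iff.mpr fun i _ => prod_ne_zero_iff.mpr fun j hj =>
      sub_ne_zero.mpr (hy.ne (mem_Ioi.mp hj).ne)
  exact mul_left_cancel₀ hne (hdet.trans (mul_comm _ _))

end Cauchy

theorem Matrix.det_cauchy {K : Type*} [Field K] {n : ℕ} (x y : Fin n → K)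
    (hxy : ∀ i j, x i + y j ≠ 0) (hy : Function.Injective y) :
    det (of fun i j => (x i + y j)⁻¹) =
      (∏ i : Fin n, ∏ j ∈ Ioi i, (x j - x i)) * (∏ i : Fin n, ∏ j ∈ Ioi i, (y j - y i)) /
        ∏ i : Fin n, ∏ j : Fin n, (x i + y j) := by
  set C : Matrix (Fin n) (Fin n) K := of fun i j => (x i + y j)⁻¹
  have hrows : vandermonde x * of (fun (m j : Fin n) => (cauchyPoly y j).coeff m) =
      of fun i j => (∏ k, (x i + y k)) * C i j := by
    rw [vandermonde_mul_of_coeff _ _ (natDegree_cauchyPoly_lt y)]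
    ext i j
    rw [of_apply, of_apply, eval_cauchyPoly, show C i j = (x i + y j)⁻¹ from rfl,
      ← mul_prod_erase univ (fun k => x i + y k) (mem_univ j), mul_comm,
      inv_mul_cancel_left₀ (hxy i j)]
  have hdet := congrArg det hrows
  rw [det_mul, det_vandermonde, det_coeff_cauchyPoly hy, det_mul_column] at hdet
  rw [eq_div_iff (prod_ne_zero_iff.mpr fun i _ => prod_ne_zero_iff.mpr fun j _ => hxy i j),
    mul_comm, hdet]

theorem Fin.prod_natCast_add_one_eq_factorial {R : Type*} [CommSemiring R] (d : ℕ) :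
    ∏ i : Fin d, ((i : ℕ) + 1 : R) = d.factorial := by
  rw [Fin.prod_univ_eq_prod_range (fun i => (i + 1 : R)), ← prod_range_add_one_eq_factorial]
  push_cast
  rfl

theorem Fin.prod_natCast_add_one_div_add_two {K : Type*} [Field K] [CharZero K] (d : ℕ) :
    ∏ i : Fin d, (((i : ℕ) + 1 : K) / ((i : ℕ) + 2)) = 1 / (d + 1) := by
  rw [Fin.prod_univ_eq_prod_range (fun i => ((i + 1 : K) / (i + 2)))]
  induction d with
  | zero => simp
  | succ d ih =>
    rw [prod_range_succ, ih]
    push_cast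
    field_simp
    ring

/-- The `d × d` matrix with (1-based) entries `jk/((j+1)(j+k+1))` has determinant
`d!/(d+1) · ∏_{i<j}(j-i)² / ∏_{i,j}(i+j+1)`, which is nonzero. -/
theorem cauchy_like_det' (d : ℕ) :
    letI M : Matrix (Fin d) (Fin d) ℝ :=
      Matrix.of fun j k => (((j : ℕ) + 1 : ℝ) * ((k : ℕ) + 1 : ℝ)) /
        ((((j : ℕ) + 2 : ℝ)) * (((j : ℕ) + (k : ℕ) + 3 : ℝ)))
    M.det = ((Nat.factorial d : ℝ) / (d + 1 : ℝ)) *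
        (∏ i : Fin d, ∏ j ∈ Finset.univ.filter (fun j : Fin d => i < j),
          (((j : ℕ) : ℝ) - ((i : ℕ) : ℝ)) ^ 2) /
        (∏ i : Fin d, ∏ j : Fin d, ((i : ℕ) + (j : ℕ) + 3 : ℝ)) ∧
      M.det ≠ 0 := by
  generalize hMdef : (of _ : Matrix (Fin d) (Fin d) ℝ) = M
  set x : Fin d → ℝ := fun i => (i : ℕ) + 2
  set y : Fin d → ℝ := fun j => (j : ℕ) + 1
  have hy : Function.Injective y := fun a b h => Fin.ext (by simpa [y] using h)
  have hM : M = diagonal (fun i : Fin d => ((i : ℕ) + 1 : ℝ) / ((i : ℕ) + 2)) *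
      of (fun i j => (x i + y j)⁻¹) * diagonal y := by
    ext i j
    simp only [← hMdef, x, y, of_apply, mul_diagonal, diagonal_mul]
    field_simp
    ring
  have hxy (i j : Fin d) : x i + y j = (i : ℕ) + (j : ℕ) + 3 := by ring
  refine (fun hdet => ⟨hdet,
    hdet ▸ div_ne_zero (mul_ne_zero (by positivity) ?gaps) (by positivity)⟩) ?formula
  case formula =>
    rw [hM, det_mul, det_mul, det_diagonal, det_diagonal,
      det_cauchy x y (fun i j => by positivity) hy,
      Fin.prod_natCast_add_one_div_add_two, Fin.prod_natCast_add_one_eq_factorial]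
    simp only [hxy, filter_lt_eq_Ioi, x, y, add_sub_add_right_eq_sub, ← sq, prod_pow]
    ring
  case gaps =>
    refine prod_ne_zero_iff.mpr fun i _ => prod_ne_zero_iff.mpr fun j hj => ?_
    have hij : (i : ℕ) < j := by simpa using hj
    exact pow_ne_zero 2 (sub_ne_zero.mpr (by exact_mod_cast hij.ne'))
end

section
/- There exist invertible real d×d matrices H such that H·S_mono·H^T = S_axis, where S_axis is the upper-triangular matrix with diagonal entries 1/2 and entries 1 above the diagonal, and S_mono is the matrix with entries j/(i+j). Consequently, the set of matrices {X·S_axis·X^T : X ∈ ℝ^{d×d}} equals the set {X·S_mono·X^T : X ∈ ℝ^{d×d}}. -/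
open scoped BigOperators
open Matrix

/-- The second signature matrix of the canonical axis path: upper triangular with
diagonal entries `1/2` and entries `1` above the diagonal. -/
noncomputable def Saxis (d : ℕ) : Matrix (Fin d) (Fin d) ℝ :=
  Matrix.of fun i j => if i = j then (1 : ℝ) / 2 else if i < j then 1 else 0

/-- The second signature matrix of the canonical monomial path: (1-based) entries
`j/(i+j)`. -/
noncomputable def Smono (d : ℕ) : Matrix (Fin d) (Fin d) ℝ :=
  Matrix.of fun i j => ((j : ℕ) + 1 : ℝ) / ((i : ℕ) + (j : ℕ) + 2 : ℝ)

/-!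
Both `S_mono` and `S_axis` have symmetric part `𝟙𝟙ᵀ / 2`, and an upper triangular `U` with
`U + Uᵀ = 𝟙𝟙ᵀ` can only be `S_axis`. So it suffices to find an invertible lower triangular `H`
with `H 𝟙 = 𝟙` such that `H S_mono` is upper triangular. With nodes `u a = a + 1`, take for
row `i` of `H` the partial-fraction coefficients `c a` of
`∏_{b<i} (x - u b) / ∏_{a≤i} (x + u a) = ∑_{a≤i} c a / (x + u a)`:
evaluating at the roots `x = u b`, `b < i`, kills the entries of `H S_mono` below the diagonal,
and comparing leading terms gives `∑ c a = 1`.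
-/

open Finset
open scoped Polynomial

namespace Lagrange

variable {F ι : Type*} [Field F] [DecidableEq ι] {s : Finset ι} {v : ι → F} {P : F[X]}

theorem sum_nodalWeight_mul_eval_eq_coeff (hvs : Set.InjOn v s) (hP : P.degree < #s) :
    ∑ i ∈ s, nodalWeight s v i * P.eval (v i) = P.coeff (#s - 1) := by
  rw [coeff_eq_sum hvs hP]
  refine sum_congr rfl fun i _ => ?_
  rw [nodalWeight, prod_inv_distrib, div_eq_inv_mul]

theorem sum_nodalWeight_mul_eval_div_sub_eq_zero (hvs : Set.InjOn v s) (hP : P.degree < #s)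
    {x : F} (hx : ∀ i ∈ s, x ≠ v i) (hPx : P.eval x = 0) :
    ∑ i ∈ s, nodalWeight s v i * P.eval (v i) / (x - v i) = 0 := by
  have h := eval_interpolate_not_at_node (fun i => P.eval (v i)) hx
  rw [← eq_interpolate hvs hP, hPx, eq_comm] at h
  rw [← (mul_eq_zero.mp h).resolve_left (eval_nodal_not_at_node hx)]
  exact sum_congr rfl fun i _ => by ring

end Lagrange

theorem Matrix.congruenceOrbit_eq_of_isUnit {R n : Type*} [CommRing R] [Fintype n]
    [DecidableEq n] {A B H : Matrix n n R} (hH : IsUnit H) (hB : H * A * Hᵀ = B) :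
    {S | ∃ X : Matrix n n R, S = X * B * Xᵀ} = {S | ∃ X : Matrix n n R, S = X * A * Xᵀ} := by
  obtain ⟨H, rfl⟩ := hH
  have hA : A = (↑H⁻¹ : Matrix n n R) * B * (↑H⁻¹ : Matrix n n R)ᵀ := by
    rw [← hB, Matrix.mul_assoc, Matrix.mul_assoc, ← transpose_mul, H.inv_mul, transpose_one,
      Matrix.mul_one, ← Matrix.mul_assoc, H.inv_mul, Matrix.one_mul]
  ext S
  constructor
  · rintro ⟨X, rfl⟩
    exact ⟨X * H, by simp only [← hB, transpose_mul, Matrix.mul_assoc]⟩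
  · rintro ⟨X, rfl⟩
    exact ⟨X * (↑H⁻¹ : Matrix n n R), by rw [hA]; simp only [transpose_mul, Matrix.mul_assoc]⟩

theorem eq_Saxis_of_isUpperTriangular {d : ℕ} {U : Matrix (Fin d) (Fin d) ℝ}
    (hU : U.IsUpperTriangular) (hsymm : U + Uᵀ = vecMulVec 1 1) : U = Saxis d := by
  ext i j
  have hij := congrFun₂ hsymm i j
  simp only [Matrix.add_apply, transpose_apply, vecMulVec_apply, Pi.one_apply, mul_one] at hij
  rcases lt_trichotomy i j with hlt | rfl | hgt
  · simpa [Saxis, hlt.ne, hlt, hU (show id i < id j from hlt)] using hij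
  · simp only [Saxis, of_apply, if_true]
    linarith
  · simp [Saxis, hgt.ne', hgt.not_gt, hU (show id j < id i from hgt)]

/-- The second signature matrix `∫₀¹ t^{u a} d(t^{u b})` of the path `t ↦ (t^{u a})_a`;
`Smono` is the case `u a = a + 1`. -/
noncomputable def monomialSignature {n : Type*} (u : n → ℝ) : Matrix n n ℝ :=
  of fun a b => u b / (u a + u b)

theorem monomialSignature_add_transpose {n : Type*} {u : n → ℝ} (hu : ∀ a b, u a + u b ≠ 0) :
    monomialSignature u + (monomialSignature u)ᵀ = vecMulVec 1 1 := by
  ext a b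
  simp only [monomialSignature, Matrix.add_apply, transpose_apply, of_apply, vecMulVec_apply,
    Pi.one_apply, mul_one]
  rw [add_comm (u b) (u a), ← add_div, add_comm (u b) (u a), div_self (hu a b)]

section reduction

open Lagrange

variable {d : ℕ}

/-- Row `i` holds the partial-fraction coefficients of `∏_{b<i} (x - u b) / ∏_{a≤i} (x + u a)`. -/
noncomputable def reductionMatrix (u : Fin d → ℝ) : Matrix (Fin d) (Fin d) ℝ :=
  of fun i a => if a ≤ i then nodalWeight (Iic i) (-u) a * (nodal (Iio i) u).eval ((-u) a) else 0

theorem reductionMatrix_isLowerTriangular (u : Fin d → ℝ) :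
    (reductionMatrix u).IsLowerTriangular := by
  intro i a (hia : i < a)
  simp [reductionMatrix, hia.not_ge]

theorem sum_reductionMatrix_mul (u : Fin d → ℝ) (i : Fin d) (g : Fin d → ℝ) :
    ∑ a, reductionMatrix u i a * g a =
      ∑ a ∈ Iic i, nodalWeight (Iic i) (-u) a * (nodal (Iio i) u).eval ((-u) a) * g a := by
  simp only [reductionMatrix, of_apply, ite_mul, zero_mul]
  rw [sum_ite, sum_const_zero, add_zero]
  congr 1
  ext a
  simp

variable {u : Fin d → ℝ}

theorem degree_nodal_Iio_lt_card_Iic (i : Fin d) : (nodal (Iio i) u).degree < #(Iic i) := by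
  rw [degree_nodal, Fin.card_Iio, Fin.card_Iic]
  exact_mod_cast Nat.lt_succ_self _

theorem reductionMatrix_mulVec_one (hu : Function.Injective u) : reductionMatrix u *ᵥ 1 = 1 := by
  ext i
  have hrow := sum_reductionMatrix_mul u i 1
  simp only [Pi.one_apply, mul_one] at hrow
  simp only [mulVec, dotProduct, Pi.one_apply, mul_one]
  rw [hrow, sum_nodalWeight_mul_eval_eq_coeff (v := -u) (neg_injective.comp hu).injOn
    (degree_nodal_Iio_lt_card_Iic i), Fin.card_Iic, Nat.add_sub_cancel, ← Fin.card_Iio,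
    ← natDegree_nodal (v := u), nodal_monic.coeff_natDegree]

theorem reductionMatrix_mul_monomialSignature_isUpperTriangular (hu : Function.Injective u)
    (hsum : ∀ a b, u a + u b ≠ 0) :
    (reductionMatrix u * monomialSignature u).IsUpperTriangular := by
  intro i b (hbi : b < i)
  have hx : ∀ a ∈ Iic i, u b ≠ (-u) a := fun a _ h => hsum a b (by rw [h, Pi.neg_apply]; ring)
  rw [mul_apply, sum_reductionMatrix_mul, ← mul_zero (u b),
    ← sum_nodalWeight_mul_eval_div_sub_eq_zero (v := -u) (neg_injective.comp hu).injOn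
      (degree_nodal_Iio_lt_card_Iic i) hx (eval_nodal_at_node (mem_Iio.2 hbi)), mul_sum]
  refine sum_congr rfl fun a _ => ?_
  simp only [monomialSignature, of_apply, Pi.neg_apply, sub_neg_eq_add]
  ring

theorem reductionMatrix_diag_ne_zero (hu : Function.Injective u) (hsum : ∀ a b, u a + u b ≠ 0)
    (i : Fin d) : reductionMatrix u i i ≠ 0 := by
  simp only [reductionMatrix, of_apply, le_refl, if_true]
  refine mul_ne_zero (nodalWeight_ne_zero (neg_injective.comp hu).injOn (mem_Iic.2 le_rfl))
    (eval_nodal_not_at_node fun b _ h => hsum i b ?_)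
  rw [Pi.neg_apply] at h
  linarith

theorem isUnit_reductionMatrix (hu : Function.Injective u) (hsum : ∀ a b, u a + u b ≠ 0) :
    IsUnit (reductionMatrix u) := by
  rw [isUnit_iff_isUnit_det, det_of_isLowerTriangular _ (reductionMatrix_isLowerTriangular u),
    isUnit_iff_ne_zero, prod_ne_zero_iff]
  exact fun i _ => reductionMatrix_diag_ne_zero hu hsum i

theorem reductionMatrix_mul_monomialSignature_mul_transpose (hu : Function.Injective u)
    (hsum : ∀ a b, u a + u b ≠ 0) :
    reductionMatrix u * monomialSignature u * (reductionMatrix u)ᵀ = Saxis d := by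
  set H := reductionMatrix u
  set S := monomialSignature u
  apply eq_Saxis_of_isUpperTriangular
  · exact (reductionMatrix_mul_monomialSignature_isUpperTriangular hu hsum).mul
      (reductionMatrix_isLowerTriangular u).transpose
  · calc H * S * Hᵀ + (H * S * Hᵀ)ᵀ = H * (S + Sᵀ) * Hᵀ := by
          simp only [transpose_mul, transpose_transpose, Matrix.mul_add, Matrix.add_mul,
            Matrix.mul_assoc]
      _ = vecMulVec 1 1 := by
          rw [monomialSignature_add_transpose hsum, mul_vecMulVec, vecMulVec_mul,
            vecMul_transpose, reductionMatrix_mulVec_one hu]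

end reduction

theorem Smono_eq_monomialSignature (d : ℕ) :
    Smono d = monomialSignature fun a : Fin d => ((a : ℕ) : ℝ) + 1 := by
  ext a b
  simp only [Smono, monomialSignature, of_apply]
  ring

/-- There is an invertible matrix `H` with `H · S_mono · Hᵀ = S_axis`; consequently the
congruence orbits `{X S_axis Xᵀ}` and `{X S_mono Xᵀ}` coincide. -/
theorem axis_mono_congruent (d : ℕ) :
    (∃ H : Matrix (Fin d) (Fin d) ℝ, IsUnit H ∧ H * Smono d * Hᵀ = Saxis d) ∧
    {S : Matrix (Fin d) (Fin d) ℝ | ∃ X : Matrix (Fin d) (Fin d) ℝ, S = X * Saxis d * Xᵀ} =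
      {S : Matrix (Fin d) (Fin d) ℝ | ∃ X : Matrix (Fin d) (Fin d) ℝ, S = X * Smono d * Xᵀ} := by
  have hu : Function.Injective fun a : Fin d => ((a : ℕ) : ℝ) + 1 :=
    fun a b h => Fin.ext (by simpa using h)
  have hsum : ∀ a b : Fin d, (((a : ℕ) : ℝ) + 1) + (((b : ℕ) : ℝ) + 1) ≠ 0 :=
    fun a b => by positivity
  have hH := reductionMatrix_mul_monomialSignature_mul_transpose hu hsum
  rw [← Smono_eq_monomialSignature] at hH
  have hunit := isUnit_reductionMatrix hu hsum
  exact ⟨⟨_, hunit, hH⟩, congruenceOrbit_eq_of_isUnit hunit hH⟩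
end

section
/- If P = 0 and Q is a nonzero skew-symmetric matrix arising from a two-segment path as P = (1/2)(X₁+X₂)(X₁+X₂)^T and Q = (1/2)(X₁X₂^T − X₂X₁^T), then Q = 0. Hence no matrix with zero symmetric part and nonzero skew part is the signature matrix of a two-segment path; the signature image of two-segment paths is not closed. -/
open scoped BigOperators
open Matrix

set_option maxHeartbeats 1600000 in
/-- If a two-segment path has vanishing symmetric signature part `P = 0`, then its
skew-symmetric part `Q` also vanishes.  Hence no matrix with zero symmetric part and
nonzero skew-symmetric part is the signature matrix of a two-segment path, and (for
`d ≥ 2`) the signature image of two-segment paths is not closed. -/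
theorem two_step_image_not_closed (d : ℕ) :
    (∀ X₁ X₂ : Fin d → ℝ,
      ((1 : ℝ) / 2) • Matrix.vecMulVec (X₁ + X₂) (X₁ + X₂) = 0 →
      ((1 : ℝ) / 2) • (Matrix.vecMulVec X₁ X₂ - Matrix.vecMulVec X₂ X₁) = 0) ∧
    (2 ≤ d → ¬ IsClosed {S : Matrix (Fin d) (Fin d) ℝ | ∃ X₁ X₂ : Fin d → ℝ,
      S = ((1 : ℝ) / 2) • Matrix.vecMulVec (X₁ + X₂) (X₁ + X₂) +
          ((1 : ℝ) / 2) • (Matrix.vecMulVec X₁ X₂ - Matrix.vecMulVec X₂ X₁)}) := by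
  have part1 : ∀ X₁ X₂ : Fin d → ℝ,
      ((1 : ℝ) / 2) • Matrix.vecMulVec (X₁ + X₂) (X₁ + X₂) = 0 →
      ((1 : ℝ) / 2) • (Matrix.vecMulVec X₁ X₂ - Matrix.vecMulVec X₂ X₁) = 0 := by
    intro X₁ X₂ h
    have hv : ∀ i, X₁ i + X₂ i = 0 := by
      intro i
      have h' := congrFun (congrFun h i) i
      simp [Matrix.smul_apply, Matrix.vecMulVec_apply, Pi.add_apply, smul_eq_mul] at h'
      nlinarith [h']
    ext i j
    have e1 : X₂ i = -X₁ i := by have := hv i; linarith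
    have e2 : X₂ j = -X₁ j := by have := hv j; linarith
    simp only [Matrix.smul_apply, Matrix.sub_apply, Matrix.vecMulVec_apply,
      smul_eq_mul, Matrix.zero_apply, e1, e2]
    ring
  refine ⟨part1, fun hd hclosed => ?_⟩
  set i0 : Fin d := ⟨0, by omega⟩ with hi0
  set i1 : Fin d := ⟨1, by omega⟩ with hi1
  have hne : i0 ≠ i1 := by simp [hi0, hi1, Fin.ext_iff]
  set A : Matrix (Fin d) (Fin d) ℝ :=
    Matrix.of fun i j => if i = i0 ∧ j = i1 then (1:ℝ) else if i = i1 ∧ j = i0 then -1 else 0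
    with hA
  set E : Matrix (Fin d) (Fin d) ℝ :=
    Matrix.of fun i j => if i = i1 ∧ j = i1 then (1:ℝ) else 0 with hE
  set X₁ : ℕ → Fin d → ℝ := fun n j =>
    if j = i0 then (n+1:ℝ) else if j = i1 then 1/(n+1:ℝ) else 0 with hX1
  set X₂ : ℕ → Fin d → ℝ := fun n j =>
    if j = i0 then -(n+1:ℝ) else if j = i1 then 1/(n+1:ℝ) else 0 with hX2
  set f : ℕ → Matrix (Fin d) (Fin d) ℝ := fun n =>
    ((1 : ℝ) / 2) • Matrix.vecMulVec (X₁ n + X₂ n) (X₁ n + X₂ n) +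
      ((1 : ℝ) / 2) • (Matrix.vecMulVec (X₁ n) (X₂ n) - Matrix.vecMulVec (X₂ n) (X₁ n))
    with hf
  have hpos : ∀ n : ℕ, (0:ℝ) < (n+1:ℝ) := by intro n; positivity
  have hfeq : ∀ n, f n = (2/((n+1:ℝ))^2) • E + A := by
    intro n
    ext i j
    have hn := (hpos n).ne'
    simp only [hf, hA, hE, Matrix.add_apply, Matrix.smul_apply, Matrix.sub_apply,
      Matrix.vecMulVec_apply, Pi.add_apply, smul_eq_mul, Matrix.of_apply, hX1, hX2]
    by_cases hii0 : i = i0 <;> by_cases hii1 : i = i1 <;>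
      by_cases hji0 : j = i0 <;> by_cases hji1 : j = i1 <;>
      (try exact absurd (hii0.symm.trans hii1) hne) <;>
      (try exact absurd (hji0.symm.trans hji1) hne) <;>
      simp only [hii0, hii1, hji0, hji1, if_true, if_false, and_self, and_true, true_and,
        if_pos, hne, Ne.symm hne, ite_true, ite_false, eq_self_iff_true, and_false,
        false_and, if_neg, not_false_iff] <;>
      (try simp [hne, Ne.symm hne]) <;> field_simp <;> ring
  have htend : Filter.Tendsto f Filter.atTop (nhds A) := by
    have hb : Filter.Tendsto (fun n : ℕ => ((n:ℝ)+1)^2) Filter.atTop Filter.atTop :=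
      (Filter.tendsto_pow_atTop two_ne_zero).comp
        (Filter.tendsto_atTop_add_const_right _ 1 tendsto_natCast_atTop_atTop)
    have h1 : Filter.Tendsto (fun n : ℕ => 2/(((n:ℝ)+1)^2)) Filter.atTop (nhds 0) :=
      Filter.Tendsto.div_atTop tendsto_const_nhds hb
    have hfeq' : f = fun n : ℕ => (2/(((n:ℝ)+1))^2) • E + A := funext hfeq
    rw [hfeq']
    have h2 := (h1.smul_const E).add_const A
    simpa using h2
  have hmem : A ∈ {S : Matrix (Fin d) (Fin d) ℝ | ∃ X₁ X₂ : Fin d → ℝ,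
      S = ((1 : ℝ) / 2) • Matrix.vecMulVec (X₁ + X₂) (X₁ + X₂) +
          ((1 : ℝ) / 2) • (Matrix.vecMulVec X₁ X₂ - Matrix.vecMulVec X₂ X₁)} :=
    hclosed.mem_of_tendsto htend (Filter.Eventually.of_forall fun n => ⟨X₁ n, X₂ n, rfl⟩)
  obtain ⟨Y₁, Y₂, hY⟩ := hmem
  have entry : ∀ i j, A i j = ((1:ℝ)/2) * ((Y₁ i + Y₂ i) * (Y₁ j + Y₂ j)) +
      ((1:ℝ)/2) * (Y₁ i * Y₂ j - Y₂ i * Y₁ j) := by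
    intro i j
    have := congrFun (congrFun hY i) j
    simpa [Matrix.add_apply, Matrix.smul_apply, Matrix.sub_apply,
      Matrix.vecMulVec_apply, Pi.add_apply, smul_eq_mul] using this
  have hdiag : ∀ i, Y₁ i + Y₂ i = 0 := by
    intro i
    have h0 := entry i i
    have hAii : A i i = 0 := by
      simp only [hA, Matrix.of_apply]
      rcases eq_or_ne i i0 with h | h <;> rcases eq_or_ne i i1 with h' | h' <;>
        simp_all
    rw [hAii] at h0
    nlinarith [h0]
  have h01 := entry i0 i1
  have hA01 : A i0 i1 = 1 := by simp [hA]
  rw [hA01] at h01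
  have e0 := hdiag i0
  have e1 := hdiag i1
  have f0 : Y₂ i0 = -Y₁ i0 := by linarith
  have f1 : Y₂ i1 = -Y₁ i1 := by linarith
  rw [f0, f1] at h01
  ring_nf at h01
  exact one_ne_zero h01
end

section
/- An element P of the degree ≥ 1 part of the truncated tensor algebra T^n(ℝ^d) is a Lie polynomial (i.e. lies in Lie^n(ℝ^d)) if and only if σ_{I⧢J}(P) = 0 for all nonempty words I, J with |I|+|J| ≤ n, where σ_{I⧢J} is the linear functional given by the coefficient of the shuffle product of I and J. -/
open scoped BigOperators

section TruncatedTensorAlgebra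

variable {K : Type*} [Field K] {d : ℕ}

/-- Concatenation (tensor) product on the tensor algebra, modelled as functions on words. -/
def tmul (f g : List (Fin d) → K) : List (Fin d) → K :=
  fun l => ∑ i ∈ Finset.range (l.length + 1), f (l.take i) * g (l.drop i)

/-- Truncation: kill all coordinates indexed by words of length `> n`. -/
def trunc (n : ℕ) (f : List (Fin d) → K) : List (Fin d) → K :=
  fun l => if l.length ≤ n then f l else 0

/-- The product of the truncated tensor algebra `T^n(K^d)`. -/
def tmulT (n : ℕ) (f g : List (Fin d) → K) : List (Fin d) → K :=
  trunc n (tmul f g)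

/-- The Lie bracket `[f,g] = f ⊗ g - g ⊗ f` in the truncated tensor algebra. -/
def lieT (n : ℕ) (f g : List (Fin d) → K) : List (Fin d) → K :=
  tmulT n f g - tmulT n g f

/-- The generator `e_i` of the tensor algebra. -/
def gen (i : Fin d) : List (Fin d) → K := fun l => if l = [i] then 1 else 0

/-- The unit `1` of the tensor algebra. -/
def tone : List (Fin d) → K := fun l => if l = [] then 1 else 0

/-- `InLie d n K P` says that `P` belongs to the free Lie algebra `Lie^n(K^d)`, the
smallest Lie subalgebra of `T^n(K^d)` containing the generators `e_1, …, e_d`. -/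
inductive InLie (d n : ℕ) (K : Type*) [Field K] : (List (Fin d) → K) → Prop
  | gen (i : Fin d) : InLie d n K (gen i)
  | zero : InLie d n K 0
  | add {f g : List (Fin d) → K} : InLie d n K f → InLie d n K g → InLie d n K (f + g)
  | smul (c : K) {f : List (Fin d) → K} : InLie d n K f → InLie d n K (c • f)
  | bracket {f g : List (Fin d) → K} :
      InLie d n K f → InLie d n K g → InLie d n K (lieT n f g)

/-- Powers in the truncated tensor algebra. -/
def powT (n : ℕ) (f : List (Fin d) → K) : ℕ → (List (Fin d) → K)
  | 0 => tone
  | r + 1 => tmulT n f (powT n f r)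

/-- The tensor exponential `exp(f) = ∑ f^{⊗ r}/r!` in `T^n(K^d)`. -/
noncomputable def texp (n : ℕ) (f : List (Fin d) → K) : List (Fin d) → K :=
  ∑ r ∈ Finset.range (n + 1), ((r.factorial : K)⁻¹) • powT n f r

/-- The tensor logarithm `log(1 + Q) = ∑_{r ≥ 1} (-1)^{r-1} Q^{⊗ r}/r` in `T^n(K^d)`. -/
noncomputable def tlog (n : ℕ) (f : List (Fin d) → K) : List (Fin d) → K :=
  ∑ r ∈ Finset.Icc 1 n, (((-1 : K) ^ (r - 1)) / (r : K)) • powT n (f - tone) r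

/-- The multiset of shuffles (interleavings) of two words. -/
def shuffles {α : Type*} : List α → List α → Multiset (List α)
  | [], l => {l}
  | l, [] => {l}
  | a :: as, b :: bs =>
      ((shuffles as (b :: bs)).map (a :: ·)) + ((shuffles (a :: as) bs).map (b :: ·))
  termination_by l₁ l₂ => l₁.length + l₂.length
  decreasing_by
    all_goals simp only [List.length_cons]
    all_goals omega

/-- The shuffle linear form `σ_{I ⧢ J}` evaluated on a tensor `P`. -/
def shuffleForm (P : List (Fin d) → K) (I J : List (Fin d)) : K :=
  ((shuffles I J).map P).sum

end TruncatedTensorAlgebra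

/-- A word is a Lyndon word if it is nonempty and strictly lexicographically smaller
than each of its proper rotations. -/
def IsLyndon {α : Type*} [LinearOrder α] (l : List α) : Prop :=
  l ≠ [] ∧ ∀ k : ℕ, 0 < k → k < l.length → l < l.rotate k

open Classical in
/-- The length of the longest proper Lyndon suffix of a word. -/
noncomputable def suffixLen {d : ℕ} (l : List (Fin d)) : ℕ :=
  Nat.findGreatest (fun j => IsLyndon (l.drop (l.length - j))) (l.length - 1)

/-- Fuel-based recursion computing the Lyndon bracketing `b(I)`:
`b(i) = e_i` and `b(I) = [b(I₁), b(I₂)]` where `I = I₁I₂` with `I₂` the longest proper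
Lyndon right factor of `I`. -/
noncomputable def bracketingFuel (K : Type*) [Field K] {d : ℕ} (n : ℕ) :
    ℕ → List (Fin d) → (List (Fin d) → K)
  | _, [i] => gen i
  | fuel + 1, l =>
      let m := min (max 1 (suffixLen l)) (l.length - 1)
      lieT n (bracketingFuel K n fuel (l.take (l.length - m)))
             (bracketingFuel K n fuel (l.drop (l.length - m)))
  | 0, _ => 0

/-- The Lyndon bracketing `b(I)` of a word `I`, as an element of `T^n(K^d)`. -/
noncomputable def bracketing (K : Type*) [Field K] {d : ℕ} (n : ℕ) (l : List (Fin d)) :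
    List (Fin d) → K :=
  bracketingFuel K n l.length l

/-!
Shuffle forms are dual to deconcatenation: `σ_{I ⧢ J}(f ⊗ g)` is the sum of
`σ_{I₁ ⧢ J₁}(f) σ_{I₂ ⧢ J₂}(g)` over all splittings `I = I₁I₂`, `J = J₁J₂`. If `f(∅) = 0` and
the shuffle forms of `f` and `g` vanish, only the splittings with `(I₁, J₁) = (I, ∅)` or
`(I₁, J₁) = (∅, J)` contribute, leaving `f(I) g(J) + f(J) g(I)`. This is symmetric in `f` and
`g`, so the shuffle forms of `[f, g]` vanish as well, and hence those of every Lie polynomial.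

Conversely, let `θ_m(P) = ∑_{|w| = m} P(w) [w₁, [w₂, …, [w_{m-1}, w_m]…]]`, a Lie polynomial.
Peeling off the first and the last letter of `x` shows, for `|x| = m`,
`(-1)^m θ_m(P)(x) = ∑_i i (-1)^i σ_{x[:i] ⧢ rev x[i:]}(P)`,
with the antipode identity `∑_i (-1)^i x[:i] ⧢ rev x[i:] = 0` absorbing the error terms.
When the shuffle forms of `P` vanish only the term `i = m` is left, so `θ_m(P) = m P` on words
of length `m`, and `P = ∑_m m⁻¹ θ_m(P)`.
-/

section Shuffles

variable {α : Type*}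

@[simp]
lemma shuffles_nil_left (l : List α) : shuffles [] l = {l} :=
  shuffles.eq_1 l

@[simp]
lemma shuffles_nil_right (l : List α) : shuffles l [] = {l} := by
  cases l with
  | nil => exact shuffles.eq_1 []
  | cons a l => exact shuffles.eq_2 _ (List.cons_ne_nil a l)

lemma shuffles_cons_cons (a b : α) (as bs : List α) :
    shuffles (a :: as) (b :: bs) =
      (shuffles as (b :: bs)).map (a :: ·) + (shuffles (a :: as) bs).map (b :: ·) :=
  shuffles.eq_3 a as b bs

lemma length_of_mem_shuffles {I J w : List α} (hw : w ∈ shuffles I J) :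
    w.length = I.length + J.length := by
  induction I, J using shuffles.induct generalizing w with
  | case1 l => simp_all
  | case2 l _ => simp_all
  | case3 a as b bs ih₁ ih₂ =>
    rw [shuffles_cons_cons] at hw
    simp only [Multiset.mem_add, Multiset.mem_map] at hw
    rcases hw with ⟨v, hv, rfl⟩ | ⟨v, hv, rfl⟩
    · simp only [List.length_cons, ih₁ hv]; omega
    · simp only [List.length_cons, ih₂ hv]; omega

end Shuffles

section Homogeneous

variable (K : Type*) [Field K] (d : ℕ)

def homogeneous (m : ℕ) : Submodule K (List (Fin d) → K) where
  carrier := {f | ∀ x, x.length ≠ m → f x = 0}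
  add_mem' hf hg x hx := by simp [hf x hx, hg x hx]
  zero_mem' _ _ := rfl
  smul_mem' c f hf x hx := by simp [hf x hx]

variable {K d}

lemma gen_mem_homogeneous (a : Fin d) : (gen a : List (Fin d) → K) ∈ homogeneous K d 1 := by
  intro x hx
  simp only [gen, ite_eq_right_iff]
  rintro rfl
  exact absurd rfl hx

lemma tmul_mem_homogeneous {p q : ℕ} {f g : List (Fin d) → K} (hf : f ∈ homogeneous K d p)
    (hg : g ∈ homogeneous K d q) : tmul f g ∈ homogeneous K d (p + q) := by
  intro x hx
  refine Finset.sum_eq_zero fun i _ => ?_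
  by_cases hi' : (x.take i).length = p
  · rw [hg _ (by simp only [List.length_drop, List.length_take] at hi' ⊢; omega), mul_zero]
  · rw [hf _ hi', zero_mul]

lemma trunc_mem_homogeneous {n m : ℕ} {f : List (Fin d) → K} (hf : f ∈ homogeneous K d m) :
    trunc n f ∈ homogeneous K d m := by
  intro x hx
  simp [trunc, hf x hx]

lemma lieT_mem_homogeneous {n p q : ℕ} {f g : List (Fin d) → K} (hf : f ∈ homogeneous K d p)
    (hg : g ∈ homogeneous K d q) : lieT n f g ∈ homogeneous K d (p + q) :=
  sub_mem (trunc_mem_homogeneous (tmul_mem_homogeneous hf hg))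
    (add_comm q p ▸ trunc_mem_homogeneous (tmul_mem_homogeneous hg hf))

lemma shuffleForm_eq_zero_of_mem_homogeneous {m : ℕ} {f : List (Fin d) → K}
    (hf : f ∈ homogeneous K d m) {I J : List (Fin d)} (h : I.length + J.length ≠ m) :
    shuffleForm f I J = 0 :=
  Multiset.sum_eq_zero fun _ hx => by
    obtain ⟨w, hw, rfl⟩ := Multiset.mem_map.1 hx
    exact hf w (length_of_mem_shuffles hw ▸ h)

end Homogeneous

section ShuffleForms

variable {K : Type*} [Field K] {d : ℕ}

@[simp]
lemma shuffleForm_nil_left (P : List (Fin d) → K) (J : List (Fin d)) :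
    shuffleForm P [] J = P J := by
  simp [shuffleForm]

@[simp]
lemma shuffleForm_nil_right (P : List (Fin d) → K) (I : List (Fin d)) :
    shuffleForm P I [] = P I := by
  simp [shuffleForm]

lemma shuffleForm_cons_cons (P : List (Fin d) → K) (a b : Fin d) (as bs : List (Fin d)) :
    shuffleForm P (a :: as) (b :: bs) =
      shuffleForm (fun l => P (a :: l)) as (b :: bs) +
        shuffleForm (fun l => P (b :: l)) (a :: as) bs := by
  simp [shuffleForm, shuffles_cons_cons, Multiset.map_map]

lemma shuffleForm_add (P Q : List (Fin d) → K) (I J : List (Fin d)) :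
    shuffleForm (P + Q) I J = shuffleForm P I J + shuffleForm Q I J := by
  simp [shuffleForm, Multiset.sum_map_add]

lemma shuffleForm_smul (c : K) (P : List (Fin d) → K) (I J : List (Fin d)) :
    shuffleForm (c • P) I J = c * shuffleForm P I J := by
  simp [shuffleForm, Multiset.sum_map_mul_left]

lemma shuffleForm_sub (P Q : List (Fin d) → K) (I J : List (Fin d)) :
    shuffleForm (P - Q) I J = shuffleForm P I J - shuffleForm Q I J := by
  simp [shuffleForm, Multiset.sum_map_sub]

lemma shuffleForm_trunc {n : ℕ} (P : List (Fin d) → K) {I J : List (Fin d)}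
    (h : I.length + J.length ≤ n) : shuffleForm (trunc n P) I J = shuffleForm P I J := by
  refine congrArg Multiset.sum (Multiset.map_congr rfl fun w hw => ?_)
  simp [trunc, length_of_mem_shuffles hw, h]

lemma tmul_cons (f g : List (Fin d) → K) (c : Fin d) (w : List (Fin d)) :
    tmul f g (c :: w) = f [] * g (c :: w) + tmul (fun l => f (c :: l)) g w := by
  simp only [tmul, List.length_cons, Finset.sum_range_succ' _ (w.length + 1),
    List.take_succ_cons, List.drop_succ_cons, List.take_zero, List.drop_zero]
  ring

def splitShuffleForm (f g : List (Fin d) → K) (I J : List (Fin d)) : K :=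
  ∑ i ∈ Finset.range (I.length + 1), ∑ j ∈ Finset.range (J.length + 1),
    shuffleForm f (I.take i) (J.take j) * shuffleForm g (I.drop i) (J.drop j)

lemma splitShuffleForm_nil_left (f g : List (Fin d) → K) (J : List (Fin d)) :
    splitShuffleForm f g [] J = tmul f g J := by
  simp [splitShuffleForm, tmul]

lemma splitShuffleForm_nil_right (f g : List (Fin d) → K) (I : List (Fin d)) :
    splitShuffleForm f g I [] = tmul f g I := by
  simp [splitShuffleForm, tmul]

lemma splitShuffleForm_cons_cons (f g : List (Fin d) → K) (a b : Fin d) (as bs : List (Fin d)) :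
    splitShuffleForm f g (a :: as) (b :: bs) =
      f [] * shuffleForm g (a :: as) (b :: bs) +
        splitShuffleForm (fun l => f (a :: l)) g as (b :: bs) +
          splitShuffleForm (fun l => f (b :: l)) g (a :: as) bs := by
  simp only [splitShuffleForm, List.length_cons, Finset.sum_range_succ' _ (as.length + 1),
    Finset.sum_range_succ' _ (bs.length + 1), List.take_succ_cons, List.drop_succ_cons,
    List.take_zero, List.drop_zero, shuffleForm_cons_cons, shuffleForm_nil_left,
    shuffleForm_nil_right, add_mul, Finset.sum_add_distrib]
  ring

lemma shuffleForm_tmul (f g : List (Fin d) → K) (I J : List (Fin d)) :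
    shuffleForm (tmul f g) I J = splitShuffleForm f g I J := by
  induction I, J using shuffles.induct generalizing f with
  | case1 J => rw [shuffleForm_nil_left, splitShuffleForm_nil_left]
  | case2 I _ => rw [shuffleForm_nil_right, splitShuffleForm_nil_right]
  | case3 a as b bs ih₁ ih₂ =>
    have hcons (c : Fin d) : (fun l => tmul f g (c :: l)) =
        f [] • (fun l => g (c :: l)) + tmul (fun l => f (c :: l)) g := by
      funext l; simp [tmul_cons]
    rw [shuffleForm_cons_cons, hcons, hcons, shuffleForm_add, shuffleForm_add, shuffleForm_smul,
      shuffleForm_smul, ih₁, ih₂, splitShuffleForm_cons_cons, shuffleForm_cons_cons g]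
    ring

def ShuffleFormsVanish (n : ℕ) (P : List (Fin d) → K) : Prop :=
  ∀ I J : List (Fin d), I ≠ [] → J ≠ [] → I.length + J.length ≤ n → shuffleForm P I J = 0

lemma splitShuffleForm_of_shuffleFormsVanish {n : ℕ} {f g : List (Fin d) → K} (hf₀ : f [] = 0)
    (hf : ShuffleFormsVanish n f) (hg : ShuffleFormsVanish n g) {I J : List (Fin d)}
    (hI : I ≠ []) (hJ : J ≠ []) (hn : I.length + J.length ≤ n) :
    splitShuffleForm f g I J = f I * g J + f J * g I := by
  have hI₀ : 0 < I.length := List.length_pos_iff.2 hI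
  have hJ₀ : 0 < J.length := List.length_pos_iff.2 hJ
  rw [splitShuffleForm, ← Finset.sum_product' (f := fun i j =>
      shuffleForm f (I.take i) (J.take j) * shuffleForm g (I.drop i) (J.drop j)),
    Finset.sum_eq_add_of_mem (I.length, 0) (0, J.length) (by simp) (by simp)
      (by simp only [ne_eq, Prod.mk.injEq, List.length_eq_zero_iff, not_and]; omega)]
  · simp
  rintro ⟨i, j⟩ hij hne
  simp only [Finset.mem_product, Finset.mem_range] at hij
  simp only [ne_eq, Prod.mk.injEq, not_and] at hne
  have hvanish (P : List (Fin d) → K) (hP : ShuffleFormsVanish n P) (I' J' : List (Fin d))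
      (hI' : 0 < I'.length) (hJ' : 0 < J'.length) (hn' : I'.length + J'.length ≤ n) :
      shuffleForm P I' J' = 0 :=
    hP I' J' (List.length_pos_iff.1 hI') (List.length_pos_iff.1 hJ') hn'
  rcases Nat.eq_zero_or_pos i with rfl | hi <;> rcases Nat.eq_zero_or_pos j with rfl | hj
  · simp [hf₀]
  · rw [hvanish g hg, mul_zero] <;> simp only [List.length_drop] <;> omega
  · rw [hvanish g hg, mul_zero] <;> simp only [List.length_drop] <;> omega
  · rw [hvanish f hf, zero_mul] <;> simp only [List.length_take] <;> omega

lemma lieT_shuffleFormsVanish {n : ℕ} {f g : List (Fin d) → K} (hf₀ : f [] = 0)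
    (hg₀ : g [] = 0) (hf : ShuffleFormsVanish n f) (hg : ShuffleFormsVanish n g) :
    ShuffleFormsVanish n (lieT n f g) := by
  intro I J hI hJ hn
  rw [lieT, shuffleForm_sub, tmulT, tmulT, shuffleForm_trunc _ hn, shuffleForm_trunc _ hn,
    shuffleForm_tmul, shuffleForm_tmul,
    splitShuffleForm_of_shuffleFormsVanish hf₀ hf hg hI hJ hn,
    splitShuffleForm_of_shuffleFormsVanish hg₀ hg hf hI hJ hn]
  ring

lemma InLie.apply_nil_and_shuffleFormsVanish {n : ℕ} {P : List (Fin d) → K}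
    (h : InLie d n K P) :
    P [] = 0 ∧ ShuffleFormsVanish n P := by
  induction h with
  | gen a =>
    refine ⟨rfl, fun I J hI hJ _ => shuffleForm_eq_zero_of_mem_homogeneous
      (gen_mem_homogeneous a) ?_⟩
    have := List.length_pos_iff.2 hI
    have := List.length_pos_iff.2 hJ
    omega
  | zero => exact ⟨rfl, fun I J _ _ _ => by simp [shuffleForm]⟩
  | add _ _ ihf ihg =>
    refine ⟨by simp [ihf.1, ihg.1], fun I J hI hJ hn => ?_⟩
    rw [shuffleForm_add, ihf.2 I J hI hJ hn, ihg.2 I J hI hJ hn, add_zero]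
  | smul c _ ih =>
    refine ⟨by simp [ih.1], fun I J hI hJ hn => ?_⟩
    rw [shuffleForm_smul, ih.2 I J hI hJ hn, mul_zero]
  | bracket _ _ ihf ihg =>
    exact ⟨by simp [lieT, tmulT, trunc, tmul, ihf.1, ihg.1],
      lieT_shuffleFormsVanish ihf.1 ihg.1 ihf.2 ihg.2⟩

end ShuffleForms

section Dynkin

variable {K : Type*} [Field K] {d : ℕ}

lemma tmul_gen_cons (a c : Fin d) (g : List (Fin d) → K) (y : List (Fin d)) :
    tmul (gen a) g (c :: y) = if c = a then g y else 0 := by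
  rw [tmul, Finset.sum_eq_single 1]
  · by_cases h : c = a <;> simp [gen, h]
  · intro i hi hi₁
    rw [gen, if_neg, zero_mul]
    intro h
    have := congrArg List.length h
    simp only [List.length_cons, Finset.mem_range, Order.lt_add_one_iff, List.length_take,
      List.length_nil, zero_add] at hi this
    omega
  · simp

lemma tmul_gen_append (a e : Fin d) (g : List (Fin d) → K) (x : List (Fin d)) :
    tmul g (gen a) (x ++ [e]) = if e = a then g x else 0 := by
  rw [tmul, Finset.sum_eq_single x.length]
  · by_cases h : e = a <;> simp [gen, h]
  · intro i hi hix
    rw [gen, if_neg, mul_zero]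
    intro h
    have := congrArg List.length h
    simp only [List.length_append, List.length_cons, List.length_nil, zero_add,
      Finset.mem_range, Order.lt_add_one_iff, List.length_drop] at hi this
    omega
  · simp

/-- `dynkin n m P = ∑_{|w| = m} P(w) [w₁, [w₂, …, [w_{m-1}, w_m]…]]`. -/
noncomputable def dynkin (n : ℕ) : ℕ → (List (Fin d) → K) → List (Fin d) → K
  | 0, _ => 0
  | 1, P => ∑ a, P [a] • gen a
  | m + 2, P => ∑ a, lieT n (gen a) (dynkin n (m + 1) fun l => P (a :: l))

lemma inLie_sum {n : ℕ} {ι : Type*} (s : Finset ι) (f : ι → List (Fin d) → K)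
    (h : ∀ i ∈ s, InLie d n K (f i)) : InLie d n K (∑ i ∈ s, f i) :=
  Finset.sum_induction f (InLie d n K) (fun _ _ => .add) .zero h

lemma inLie_dynkin (n m : ℕ) (P : List (Fin d) → K) : InLie d n K (dynkin n m P) := by
  induction m, P using dynkin.induct with
  | case1 => exact .zero
  | case2 => exact inLie_sum _ _ fun a _ => .smul _ (.gen a)
  | case3 m P ih => exact inLie_sum _ _ fun a _ => .bracket (.gen a) (ih a)

lemma dynkin_mem_homogeneous (n m : ℕ) (P : List (Fin d) → K) :
    dynkin n m P ∈ homogeneous K d m := by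
  induction m, P using dynkin.induct with
  | case1 => exact zero_mem _
  | case2 => exact Submodule.sum_mem _ fun a _ => Submodule.smul_mem _ _ (gen_mem_homogeneous a)
  | case3 m P ih =>
    refine Submodule.sum_mem _ fun a _ => ?_
    rw [show m.succ.succ = 1 + (m + 1) by omega]
    exact lieT_mem_homogeneous (gen_mem_homogeneous a) (ih a)

lemma dynkin_one_apply (n : ℕ) (P : List (Fin d) → K) (c : Fin d) :
    dynkin n 1 P [c] = P [c] := by
  simp [dynkin, gen]

lemma dynkin_apply_cons_of_eq_append (n m : ℕ) (P : List (Fin d) → K) {c e : Fin d}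
    {y x : List (Fin d)} (h : c :: y = x ++ [e]) (hn : y.length + 1 ≤ n) :
    dynkin n (m + 2) P (c :: y) =
      dynkin n (m + 1) (fun l => P (c :: l)) y - dynkin n (m + 1) (fun l => P (e :: l)) x := by
  simp only [dynkin, Finset.sum_apply, lieT, tmulT, trunc, Pi.sub_apply, List.length_cons, hn,
    if_true, tmul_gen_cons]
  simp [h, tmul_gen_append, Finset.sum_sub_distrib]

def revShuffleForm (P : List (Fin d) → K) (x : List (Fin d)) (i : ℕ) : K :=
  shuffleForm P (x.take i) (x.drop i).reverse

lemma revShuffleForm_succ_of_cons_eq_append (P : List (Fin d) → K) {c e : Fin d}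
    {y x : List (Fin d)} (h : c :: y = x ++ [e]) {i : ℕ} (hi : i < y.length) :
    revShuffleForm P (c :: y) (i + 1) =
      revShuffleForm (fun l => P (c :: l)) y i +
        revShuffleForm (fun l => P (e :: l)) x (i + 1) := by
  have hlen : y.length = x.length := by simpa using congrArg List.length h
  have htake : c :: y.take i = x.take (i + 1) := by
    rw [← List.take_succ_cons, h, List.take_append_of_le_length (by omega)]
  have hdrop : y.drop i = x.drop (i + 1) ++ [e] := by
    rw [← List.drop_succ_cons, h, List.drop_append_of_le_length (by omega)]
  simp only [revShuffleForm, List.take_succ_cons, List.drop_succ_cons, hdrop,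
    List.reverse_append, List.reverse_singleton, List.singleton_append, shuffleForm_cons_cons]
  rw [htake]

lemma sum_mul_revShuffleForm_of_cons_eq_append (w : ℕ → K) (P : List (Fin d) → K)
    {c e : Fin d} {y x : List (Fin d)} (h : c :: y = x ++ [e]) :
    ∑ i ∈ Finset.range (y.length + 2), w i * revShuffleForm P (c :: y) i =
      ∑ i ∈ Finset.range (y.length + 1), w (i + 1) * revShuffleForm (fun l => P (c :: l)) y i +
        ∑ i ∈ Finset.range (x.length + 1), w i * revShuffleForm (fun l => P (e :: l)) x i := by
  have hlen : y.length = x.length := by simpa using congrArg List.length h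
  have hfirst : revShuffleForm P (c :: y) 0 = revShuffleForm (fun l => P (e :: l)) x 0 := by
    simp [revShuffleForm, h]
  have hlast : revShuffleForm P (c :: y) (y.length + 1) =
      revShuffleForm (fun l => P (c :: l)) y y.length := by
    simp [revShuffleForm]
  have hmid : ∑ i ∈ Finset.range y.length, w (i + 1) * revShuffleForm P (c :: y) (i + 1) =
      ∑ i ∈ Finset.range y.length, w (i + 1) * revShuffleForm (fun l => P (c :: l)) y i +
        ∑ i ∈ Finset.range x.length,
          w (i + 1) * revShuffleForm (fun l => P (e :: l)) x (i + 1) := by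
    rw [← hlen, ← Finset.sum_add_distrib]
    refine Finset.sum_congr rfl fun i hi => ?_
    rw [revShuffleForm_succ_of_cons_eq_append P h (Finset.mem_range.1 hi), mul_add]
  rw [Finset.sum_range_succ', Finset.sum_range_succ, Finset.sum_range_succ,
    Finset.sum_range_succ' _ x.length, hmid, hfirst, hlast]
  ring

lemma sum_neg_one_pow_mul_revShuffleForm (m : ℕ) (P : List (Fin d) → K) {x : List (Fin d)}
    (hx : x.length = m + 1) :
    ∑ i ∈ Finset.range (m + 2), (-1) ^ i * revShuffleForm P x i = 0 := by
  induction m generalizing P x with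
  | zero =>
    obtain ⟨c, rfl⟩ := List.length_eq_one_iff.1 hx
    simp [Finset.sum_range_succ, revShuffleForm]
  | succ m ih =>
    obtain ⟨c, y, rfl⟩ := List.exists_cons_of_length_eq_add_one hx
    have hne : c :: y ≠ [] := List.cons_ne_nil c y
    have hy : y.length = m + 1 := by simpa using hx
    have hx' : (c :: y).dropLast.length = m + 1 := by simp [hy]
    rw [← hy,
      sum_mul_revShuffleForm_of_cons_eq_append _ P (List.dropLast_append_getLast hne).symm, hx']
    simp only [pow_succ, mul_neg_one, neg_mul, Finset.sum_neg_distrib, hy, ih _ hy, ih _ hx',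
      neg_zero, add_zero]

lemma neg_one_pow_mul_dynkin_apply {n : ℕ} (m : ℕ) (P : List (Fin d) → K) {x : List (Fin d)}
    (hx : x.length = m + 1) (hn : m + 1 ≤ n) :
    (-1) ^ (m + 1) * dynkin n (m + 1) P x =
      ∑ i ∈ Finset.range (m + 2), (i : K) * (-1) ^ i * revShuffleForm P x i := by
  induction m generalizing P x with
  | zero =>
    obtain ⟨c, rfl⟩ := List.length_eq_one_iff.1 hx
    simp [Finset.sum_range_succ, revShuffleForm, dynkin_one_apply]
  | succ m ih =>
    obtain ⟨c, y, rfl⟩ := List.exists_cons_of_length_eq_add_one hx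
    have hne : c :: y ≠ [] := List.cons_ne_nil c y
    have hy : y.length = m + 1 := by simpa using hx
    have hx' : (c :: y).dropLast.length = m + 1 := by simp [hy]
    have happend := (List.dropLast_append_getLast hne).symm
    have hshift (t : ℕ → K) :
        ∑ i ∈ Finset.range (m + 2), ((i + 1 : ℕ) : K) * (-1) ^ (i + 1) * t i =
          -∑ i ∈ Finset.range (m + 2), (i : K) * (-1) ^ i * t i -
            ∑ i ∈ Finset.range (m + 2), (-1) ^ i * t i := by
      rw [← Finset.sum_neg_distrib, ← Finset.sum_sub_distrib]
      exact Finset.sum_congr rfl fun i _ => by push_cast; ring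
    rw [← hy, sum_mul_revShuffleForm_of_cons_eq_append _ P happend, hx', hy,
      show m + 1 + 1 = m + 2 from rfl, hshift, sum_neg_one_pow_mul_revShuffleForm m _ hy,
      dynkin_apply_cons_of_eq_append n m P happend (by omega)]
    linear_combination (-1 : K) * ih _ hy (by omega) + ih _ hx' (by omega)

lemma dynkin_apply_of_shuffleFormsVanish {n : ℕ} (m : ℕ) {P : List (Fin d) → K}
    (hP : ShuffleFormsVanish n P) {x : List (Fin d)} (hx : x.length = m + 1) (hn : m + 1 ≤ n) :
    dynkin n (m + 1) P x = (m + 1) * P x := by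
  have h := neg_one_pow_mul_dynkin_apply m P hx hn
  rw [Finset.sum_eq_single (m + 1)] at h
  · refine mul_left_cancel₀ (pow_ne_zero (m + 1) (neg_ne_zero.2 one_ne_zero)) ?_
    rw [h, revShuffleForm, List.take_of_length_le hx.le, List.drop_of_length_le hx.le]
    push_cast
    simp only [List.reverse_nil, shuffleForm_nil_right]
    ring
  · intro i hi hne
    rcases Nat.eq_zero_or_pos i with rfl | hpos
    · simp
    · rw [Finset.mem_range] at hi
      rw [revShuffleForm, hP, mul_zero] <;>
        simp only [ne_eq, ← List.length_eq_zero_iff, List.length_take, List.length_reverse,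
          List.length_drop, hx, min_eq_zero, Nat.add_eq_zero_iff, one_ne_zero, and_false,
          or_false] <;>
        omega
  · simp

lemma eq_sum_dynkin [CharZero K] {n : ℕ} {P : List (Fin d) → K} (h₀ : P [] = 0)
    (htr : ∀ x : List (Fin d), n < x.length → P x = 0) (hP : ShuffleFormsVanish n P) :
    P = ∑ m ∈ Finset.range n, ((m + 1 : K))⁻¹ • dynkin n (m + 1) P := by
  funext x
  have hterm : ∀ m ∈ Finset.range n, ((m + 1 : K))⁻¹ * dynkin n (m + 1) P x =
      if x.length = m + 1 then P x else 0 := by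
    intro m hm
    split_ifs with hx
    · rw [dynkin_apply_of_shuffleFormsVanish m hP hx (Finset.mem_range.1 hm), ← mul_assoc,
        inv_mul_cancel₀ (Nat.cast_add_one_ne_zero m), one_mul]
    · rw [dynkin_mem_homogeneous n (m + 1) P x hx, mul_zero]
  simp only [Finset.sum_apply, Pi.smul_apply, smul_eq_mul, Finset.sum_congr rfl hterm]
  rcases Nat.lt_or_ge n x.length with hlt | hle
  · rw [htr x hlt, Finset.sum_eq_zero fun m hm => if_neg (by rw [Finset.mem_range] at hm; omega)]
  rcases x with _ | ⟨c, y⟩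
  · simp [h₀]
  · simp only [List.length_cons, add_left_inj, Finset.sum_ite_eq, Finset.mem_range] at hle ⊢
    rw [if_pos (by omega)]

end Dynkin

/-- Ree's criterion: an element of the degree `≥ 1` part of `T^n(ℝ^d)` is a Lie
polynomial if and only if all shuffle linear forms `σ_{I ⧢ J}` (for nonempty words
`I, J` with `|I| + |J| ≤ n`) vanish on it. -/
theorem lie_iff_shuffles_vanish (d n : ℕ) (P : List (Fin d) → ℝ)
    (h0 : P [] = 0) (htr : ∀ l : List (Fin d), n < l.length → P l = 0) :
    InLie d n ℝ P ↔
      ∀ I J : List (Fin d), I ≠ [] → J ≠ [] → I.length + J.length ≤ n →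
        shuffleForm P I J = 0 := by
  refine ⟨fun h => h.apply_nil_and_shuffleFormsVanish.2, fun h => ?_⟩
  rw [eq_sum_dynkin h0 htr h]
  exact inLie_sum _ _ fun m _ => .smul _ (inLie_dynkin n (m + 1) P)
end
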